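/- arXiv:2007.12740 — 3 statements merged into one kernel-verified Lean document; each statement's English description precedes it below -/
import Mathlib

section
/- Let s_1, …, s_n be square-integrable real random variables with E[s_i] = e_i, and let c > 0 be a real constant. For μ, ρ ∈ ℝ define f(μ, ρ) = (1/n)·Σ_{i=1}^n E[(ρμc + (1−ρ)s_i − e_i)²]. Set μ* = (1/(nc))·Σ_{i=1}^n e_i, φ² = (1/n)·Σ_{i=1}^n (μ*c − e_i)², ψ² = (1/n)·Σ_{i=1}^n E[(s_i − e_i)²], and δ² = φ² + ψ². If δ² > 0, then f(μ*, ψ²/δ²) = φ²ψ²/δ², and f(μ, ρ) ≥ φ²ψ²/δ² for all μ, ρ ∈ ℝ; i.e., the linear shrinkage family attains its minimum average expected squared loss φ²ψ²/δ² at (μ*, ψ²/δ²). -/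
open MeasureTheory ProbabilityTheory Filter

/-!
Centering each `sᵢ` at its mean kills the cross term, so the loss splits into a bias part and a
variance part: `f(m, ρ) = ρ² c² (m - μ*)² + ρ² φ² + (1 - ρ)² ψ²`. Completing the square in `ρ`,
`ρ² φ² + (1 - ρ)² ψ² = φ² ψ² / δ² + δ² (ρ - ψ² / δ²)²`, which exhibits the minimum.
-/

lemma integral_add_mul_sub_mean_sq {Ω : Type*} [MeasurableSpace Ω] (μ : Measure Ω)
    [IsProbabilityMeasure μ] {X : Ω → ℝ} (hX : MemLp X 2 μ) {e : ℝ} (he : ∫ ω, X ω ∂μ = e)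
    (a b : ℝ) :
    ∫ ω, (a + b * (X ω - e)) ^ 2 ∂μ = a ^ 2 + b ^ 2 * ∫ ω, (X ω - e) ^ 2 ∂μ := by
  have hcen : MemLp (fun ω => X ω - e) 2 μ := hX.sub (memLp_const e)
  have hcen_int : Integrable (fun ω => X ω - e) μ := hcen.integrable one_le_two
  have hcen_mean : ∫ ω, (X ω - e) ∂μ = 0 := by
    rw [integral_sub (hX.integrable one_le_two) (integrable_const e), he, integral_const]
    simp
  have hexpand : (fun ω => (a + b * (X ω - e)) ^ 2)
      = fun ω => a ^ 2 + ((2 * a * b) * (X ω - e) + b ^ 2 * (X ω - e) ^ 2) := by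
    funext ω; ring
  have hrest_int : Integrable (fun ω => (2 * a * b) * (X ω - e) + b ^ 2 * (X ω - e) ^ 2) μ :=
    (hcen_int.const_mul _).add (hcen.integrable_sq.const_mul _)
  rw [hexpand, integral_add (integrable_const _) hrest_int,
    integral_add (hcen_int.const_mul _) (hcen.integrable_sq.const_mul _),
    integral_const_mul, integral_const_mul, hcen_mean, integral_const]
  simp

lemma Finset.sum_sub_sq_eq_sum_sub_mean_sq_add {ι : Type*} (t : Finset ι) (a : ι → ℝ)
    {ā : ℝ} (hā : t.card * ā = ∑ i ∈ t, a i) (x : ℝ) :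
    ∑ i ∈ t, (x - a i) ^ 2 = ∑ i ∈ t, (ā - a i) ^ 2 + t.card * (x - ā) ^ 2 := by
  have hsplit : ∀ i ∈ t, (x - a i) ^ 2
      = ((ā - a i) ^ 2 + (x - ā) ^ 2) + 2 * (x - ā) * (ā - a i) :=
    fun i _ => by ring
  rw [Finset.sum_congr rfl hsplit, Finset.sum_add_distrib, Finset.sum_add_distrib,
    ← Finset.mul_sum, Finset.sum_sub_distrib, ← hā]
  simp only [Finset.sum_const, nsmul_eq_mul]
  ring

lemma sq_mul_add_one_sub_sq_mul {φ ψ : ℝ} (h : φ + ψ ≠ 0) (ρ : ℝ) :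
    ρ ^ 2 * φ + (1 - ρ) ^ 2 * ψ = φ * ψ / (φ + ψ) + (φ + ψ) * (ρ - ψ / (φ + ψ)) ^ 2 := by
  field_simp
  ring

/-- Theorem 1 of the paper, reduced along the projection γ.
For square-integrable `s₁, …, sₙ` with means `eᵢ` and a constant `c > 0`, the
average expected squared loss
`f(μ, ρ) = (1/n) Σᵢ E[(ρμc + (1−ρ)sᵢ − eᵢ)²]` of the linear shrinkage family
attains its minimum value `φ²ψ²/δ²` at `(μ*, ψ²/δ²)`, where
`μ* = (1/(nc)) Σ eᵢ`, `φ² = (1/n) Σ (μ*c − eᵢ)²`, `ψ² = (1/n) Σ E[(sᵢ − eᵢ)²]`,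
and `δ² = φ² + ψ² > 0`. -/
theorem stmt1 {Ω : Type*} [MeasurableSpace Ω] (μ : Measure Ω) [IsProbabilityMeasure μ]
    (n : ℕ) (hn : 0 < n) (s : Fin n → Ω → ℝ) (hs : ∀ i, MemLp (s i) 2 μ)
    (e : Fin n → ℝ) (he : ∀ i, e i = ∫ ω, s i ω ∂μ)
    (c : ℝ) (hc : 0 < c)
    (f : ℝ → ℝ → ℝ)
    (hf : ∀ m ρ, f m ρ =
      ((1 : ℝ) / n) * ∑ i, ∫ ω, (ρ * m * c + (1 - ρ) * s i ω - e i) ^ 2 ∂μ)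
    (mStar φsq ψsq δsq : ℝ)
    (hm : mStar = ((1 : ℝ) / (n * c)) * ∑ i, e i)
    (hφ : φsq = ((1 : ℝ) / n) * ∑ i, (mStar * c - e i) ^ 2)
    (hψ : ψsq = ((1 : ℝ) / n) * ∑ i, ∫ ω, (s i ω - e i) ^ 2 ∂μ)
    (hδ : δsq = φsq + ψsq) (hδpos : 0 < δsq) :
    f mStar (ψsq / δsq) = φsq * ψsq / δsq ∧
      ∀ m ρ : ℝ, φsq * ψsq / δsq ≤ f m ρ := by
  have hn' : (n : ℝ) ≠ 0 := by positivity
  have hmean : ((Finset.univ : Finset (Fin n)).card : ℝ) * (mStar * c) = ∑ i, e i := by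
    rw [Finset.card_univ, Fintype.card_fin, hm]
    field_simp
  have hloss : ∀ m ρ, f m ρ
      = ρ ^ 2 * ((m - mStar) * c) ^ 2 + (ρ ^ 2 * φsq + (1 - ρ) ^ 2 * ψsq) := by
    intro m ρ
    have hterm : ∀ i, ∫ ω, (ρ * m * c + (1 - ρ) * s i ω - e i) ^ 2 ∂μ
        = ρ ^ 2 * (m * c - e i) ^ 2 + (1 - ρ) ^ 2 * ∫ ω, (s i ω - e i) ^ 2 ∂μ := by
      intro i
      rw [← mul_pow, ← integral_add_mul_sub_mean_sq μ (hs i) (he i).symm]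
      congr 1; funext ω; ring
    rw [hf, Finset.sum_congr rfl fun i _ => hterm i, Finset.sum_add_distrib, ← Finset.mul_sum,
      ← Finset.mul_sum, Finset.sum_sub_sq_eq_sum_sub_mean_sq_add _ _ hmean, Finset.card_univ,
      Fintype.card_fin, hφ, hψ]
    field_simp
    ring
  subst hδ
  refine ⟨?_, fun m ρ => ?_⟩
  · rw [hloss, sq_mul_add_one_sub_sq_mul hδpos.ne']
    simp
  · rw [hloss, sq_mul_add_one_sub_sq_mul hδpos.ne']
    have := sq_nonneg ((m - mStar) * c)
    have := sq_nonneg (ρ - ψsq / (φsq + ψsq))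
    nlinarith
end

section
/- Let B > 0 and κ₁, κ₂ ≥ 0 be real constants. For each T ∈ ℕ let a_T² and δ̂_T² be nonnegative random variables on a probability space and let δ_T² ∈ [0, B] be a nonnegative constant. Assume that E[a_T²] → 0 and E[(δ̂_T² − δ_T²)²] → 0 as T → ∞, and that almost surely a_T² / ((δ̂_T²)^{κ₁/2} · (δ_T²)^{κ₂/2}) ≤ 2(δ̂_T² + δ_T²), where the quotient is interpreted as 0 whenever its denominator is 0. Then E[a_T² / ((δ̂_T²)^{κ₁/2} · (δ_T²)^{κ₂/2})] → 0 as T → ∞. -/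
/-!
Fix `η > 0` and write `x = δ̂² - δ²`. Pointwise, the quotient is at most `5 η + K_η (a² + x²)`:
if `|x| ≤ η/2` and `δ² < η`, the domination bound `2 (δ̂² + δ²)` is below `5 η`; if `|x| > η/2`,
that bound is at most `4 B + 2 |x|`, which is `O_η(x²)`; otherwise `δ̂² ≥ η/2` and `δ² ≥ η`,
so the denominator is bounded below by a constant depending on `η` only. Taking expectations,
`E[quotient] ≤ 5 η + K_η (E[a²] + E[x²])`, whose upper limit is `5 η`.
-/

open MeasureTheory ProbabilityTheory Filter

theorem tendsto_zero_of_forall_le_add_mul {α : Type*} {l : Filter α} {u g : α → ℝ}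
    (hu : ∀ x, 0 ≤ u x) (hg : Tendsto g l (nhds 0))
    (h : ∀ η > 0, ∃ K, ∀ x, u x ≤ η + K * g x) : Tendsto u l (nhds 0) := by
  refine tendsto_order.2 ⟨fun a ha => .of_forall fun x => ha.trans_le (hu x), fun ε hε => ?_⟩
  obtain ⟨K, hK⟩ := h (ε / 2) (half_pos hε)
  have hlim : Tendsto (fun x => ε / 2 + K * g x) l (nhds (ε / 2)) := by
    simpa using tendsto_const_nhds.add (hg.const_mul K)
  filter_upwards [hlim.eventually (gt_mem_nhds (half_lt_self hε))] with x hx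
  exact (hK x).trans_lt hx

theorem div_rpow_mul_rpow_le_div {a d s d₀ s₀ p q : ℝ} (ha : 0 ≤ a) (hp : 0 ≤ p) (hq : 0 ≤ q)
    (hd₀ : 0 < d₀) (hs₀ : 0 < s₀) (hd : d₀ ≤ d) (hs : s₀ ≤ s) :
    a / (d ^ p * s ^ q) ≤ a / (d₀ ^ p * s₀ ^ q) := by
  gcongr
  exact Real.rpow_nonneg (hd₀.le.trans hd) p

theorem exists_div_rpow_mul_rpow_le_add_mul (B : ℝ) {κ₁ κ₂ η : ℝ} (hκ₁ : 0 ≤ κ₁) (hκ₂ : 0 ≤ κ₂)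
    (hη : 0 < η) :
    ∃ K, ∀ a d s : ℝ, 0 ≤ a → 0 ≤ s → s ≤ B →
      a / (d ^ (κ₁ / 2) * s ^ (κ₂ / 2)) ≤ 2 * (d + s) →
      a / (d ^ (κ₁ / 2) * s ^ (κ₂ / 2)) ≤ 5 * η + K * (a + (d - s) ^ 2) := by
  set c := (η / 2) ^ (κ₁ / 2) * η ^ (κ₂ / 2)
  have hc : 0 < c := by positivity
  refine ⟨max (1 / c) (4 / η + 16 * B / η ^ 2), fun a d s ha hs hsB hdom => ?_⟩
  set K := max (1 / c) (4 / η + 16 * B / η ^ 2)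
  have hK : 0 ≤ K := (by positivity : (0 : ℝ) ≤ 1 / c).trans (le_max_left _ _)
  have hKa : K * a ≤ K * (a + (d - s) ^ 2) := by
    gcongr; exact le_add_of_nonneg_right (sq_nonneg _)
  have hKx : K * (d - s) ^ 2 ≤ K * (a + (d - s) ^ 2) := by
    gcongr; exact le_add_of_nonneg_left ha
  rcases lt_or_ge (η / 2) |d - s| with hfar | hclose
  · have hB : 0 ≤ B := hs.trans hsB
    have hfar_sq : η ^ 2 / 4 ≤ |d - s| ^ 2 := by nlinarith
    have hx : 4 * B + 2 * |d - s| ≤ (4 / η + 16 * B / η ^ 2) * (d - s) ^ 2 := by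
      rw [← sq_abs (d - s), div_add_div _ _ hη.ne' (by positivity), div_mul_eq_mul_div,
        le_div_iff₀ (by positivity)]
      nlinarith [mul_le_mul_of_nonneg_left hfar_sq hB,
        mul_nonneg (mul_nonneg hη.le (abs_nonneg (d - s))) (sub_nonneg.2 hfar.le)]
    calc a / (d ^ (κ₁ / 2) * s ^ (κ₂ / 2)) ≤ 2 * (d + s) := hdom
      _ ≤ 4 * B + 2 * |d - s| := by linarith [le_abs_self (d - s)]
      _ ≤ (4 / η + 16 * B / η ^ 2) * (d - s) ^ 2 := hx
      _ ≤ K * (d - s) ^ 2 := by gcongr; exact le_max_right _ _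
      _ ≤ 5 * η + K * (a + (d - s) ^ 2) := by linarith
  · rw [abs_le] at hclose
    rcases lt_or_ge s η with hsmall | hlarge
    · linarith [mul_nonneg hK ha]
    · calc a / (d ^ (κ₁ / 2) * s ^ (κ₂ / 2)) ≤ a / c :=
            div_rpow_mul_rpow_le_div ha (by positivity) (by positivity) (by positivity) hη
              (by linarith) hlarge
        _ ≤ K * a := by rw [div_eq_inv_mul, ← one_div]; gcongr; exact le_max_left _ _
        _ ≤ 5 * η + K * (a + (d - s) ^ 2) := by linarith

theorem stmt8_general {Ω : Type*} [MeasurableSpace Ω] (μ : Measure Ω) [IsProbabilityMeasure μ]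
    (B κ₁ κ₂ : ℝ) (hκ₁ : 0 ≤ κ₁) (hκ₂ : 0 ≤ κ₂)
    (aSq δhat : ℕ → Ω → ℝ) (δsq : ℕ → ℝ)
    (haNN : ∀ T, ∀ᵐ ω ∂μ, 0 ≤ aSq T ω) (hdNN : ∀ T, ∀ᵐ ω ∂μ, 0 ≤ δhat T ω)
    (hδsq : ∀ T, δsq T ∈ Set.Icc 0 B)
    (hIntA : ∀ T, Integrable (aSq T) μ)
    (hL2 : ∀ T, MemLp (δhat T) 2 μ)
    (ha : Tendsto (fun T => ∫ ω, aSq T ω ∂μ) atTop (nhds 0))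
    (hd : Tendsto (fun T => ∫ ω, (δhat T ω - δsq T) ^ 2 ∂μ) atTop (nhds 0))
    (hdom : ∀ T, ∀ᵐ ω ∂μ,
      aSq T ω / ((δhat T ω) ^ (κ₁ / 2) * (δsq T) ^ (κ₂ / 2)) ≤
        2 * (δhat T ω + δsq T)) :
    Tendsto
      (fun T => ∫ ω, aSq T ω / ((δhat T ω) ^ (κ₁ / 2) * (δsq T) ^ (κ₂ / 2)) ∂μ)
      atTop (nhds 0) := by
  have hnonneg : ∀ T, 0 ≤ᵐ[μ] fun ω => aSq T ω / ((δhat T ω) ^ (κ₁ / 2) * (δsq T) ^ (κ₂ / 2)) :=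
    fun T => by
      filter_upwards [haNN T, hdNN T] with ω ha hd
      exact div_nonneg ha (mul_nonneg (Real.rpow_nonneg hd _) (Real.rpow_nonneg (hδsq T).1 _))
  refine tendsto_zero_of_forall_le_add_mul (fun T => integral_nonneg_of_ae (hnonneg T))
    (by simpa using ha.add hd) fun η hη => ?_
  obtain ⟨K, hK⟩ := exists_div_rpow_mul_rpow_le_add_mul B hκ₁ hκ₂ (by positivity : 0 < η / 5)
  refine ⟨K, fun T => ?_⟩
  have hIntSq : Integrable (fun ω => (δhat T ω - δsq T) ^ 2) μ :=
    ((hL2 T).sub (memLp_const _)).integrable_sq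
  have hIntSum : Integrable (fun ω => aSq T ω + (δhat T ω - δsq T) ^ 2) μ := (hIntA T).add hIntSq
  calc _ ≤ ∫ ω, (5 * (η / 5) + K * (aSq T ω + (δhat T ω - δsq T) ^ 2)) ∂μ := by
        refine integral_mono_of_nonneg (hnonneg T)
          ((integrable_const _).add (hIntSum.const_mul K)) ?_
        filter_upwards [haNN T, hdom T] with ω ha hdom
        exact hK _ _ _ ha (hδsq T).1 (hδsq T).2 hdom
    _ = η + K * ((∫ ω, aSq T ω ∂μ) + ∫ ω, (δhat T ω - δsq T) ^ 2 ∂μ) := by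
        rw [integral_add (integrable_const _) (hIntSum.const_mul K),
          integral_const_mul K, integral_add (hIntA T) hIntSq]
        simp only [integral_const, probReal_univ, smul_eq_mul, one_mul]
        ring

/-- Lemma A.1 of the supplementary material.
If `E[a_T²] → 0`, `E[(δ̂_T² − δ_T²)²] → 0`, `δ_T² ∈ [0, B]`, and a.s.
`a_T² / ((δ̂_T²)^{κ₁/2}(δ_T²)^{κ₂/2}) ≤ 2(δ̂_T² + δ_T²)`, then
`E[a_T² / ((δ̂_T²)^{κ₁/2}(δ_T²)^{κ₂/2})] → 0` (quotients are `0` when the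
denominator vanishes, which is Lean's convention for division by zero). -/
theorem stmt8 {Ω : Type*} [MeasurableSpace Ω] (μ : Measure Ω) [IsProbabilityMeasure μ]
    (B κ₁ κ₂ : ℝ) (hB : 0 < B) (hκ₁ : 0 ≤ κ₁) (hκ₂ : 0 ≤ κ₂)
    (aSq δhat : ℕ → Ω → ℝ) (δsq : ℕ → ℝ)
    (hmeasA : ∀ T, Measurable (aSq T)) (hmeasD : ∀ T, Measurable (δhat T))
    (haNN : ∀ T, ∀ᵐ ω ∂μ, 0 ≤ aSq T ω) (hdNN : ∀ T, ∀ᵐ ω ∂μ, 0 ≤ δhat T ω)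
    (hδsq : ∀ T, δsq T ∈ Set.Icc 0 B)
    (hIntA : ∀ T, Integrable (aSq T) μ)
    (hL2 : ∀ T, MemLp (δhat T) 2 μ)
    (ha : Tendsto (fun T => ∫ ω, aSq T ω ∂μ) atTop (nhds 0))
    (hd : Tendsto (fun T => ∫ ω, (δhat T ω - δsq T) ^ 2 ∂μ) atTop (nhds 0))
    (hdom : ∀ T, ∀ᵐ ω ∂μ,
      aSq T ω / ((δhat T ω) ^ (κ₁ / 2) * (δsq T) ^ (κ₂ / 2)) ≤
        2 * (δhat T ω + δsq T)) :
    Tendsto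
      (fun T => ∫ ω, aSq T ω / ((δhat T ω) ^ (κ₁ / 2) * (δsq T) ^ (κ₂ / 2)) ∂μ)
      atTop (nhds 0) :=
  stmt8_general μ B κ₁ κ₂ hκ₁ hκ₂ aSq δhat δsq haNN hdNN hδsq hIntA hL2 ha hd hdom
end

section
/- Let B > 0. For each T ∈ ℕ, let φ̂_T² and δ̂_T² be nonnegative random variables on a probability space with φ̂_T² ≤ δ̂_T² almost surely, and let φ_T², δ_T² be constants with 0 ≤ φ_T² ≤ δ_T² ≤ B. If E[(φ̂_T² − φ_T²)²] → 0 and E[(δ̂_T² − δ_T²)²] → 0 as T → ∞, then E[(φ̂_T²·δ_T² − φ_T²·δ̂_T²)² / (δ̂_T² · δ_T⁴)] → 0 as T → ∞, where the quotient is interpreted as 0 whenever its denominator is 0. -/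
/-!
Write `a, b` for the estimators `φ̂², δ̂²` and `c, d` for the constants `φ², δ²`. Since
`a d − c b = (a − c) d − c (b − d)` with `0 ≤ c ≤ d`, and since `a d, c b ∈ [0, b d]`, the
numerator `(a d − c b)²` is at most `b d · d (|a − c| + |b − d|)`. Hence the integrand is
dominated by `|φ̂² − φ²| + |δ̂² − δ²|`, whose expectation tends to zero because on a probability
space the `L¹` norm is bounded by the `L²` norm.
-/

open MeasureTheory ProbabilityTheory Filter Topology

lemma sq_mul_sub_mul_div_le {a b c d : ℝ} (ha : 0 ≤ a) (hab : a ≤ b) (hc : 0 ≤ c)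
    (hcd : c ≤ d) :
    (a * d - c * b) ^ 2 / (b * d ^ 2) ≤ |a - c| + |b - d| := by
  have hb : 0 ≤ b := ha.trans hab
  have hd : 0 ≤ d := hc.trans hcd
  have hbound : |a * d - c * b| ≤ b * d := by
    rw [abs_sub_le_iff]
    constructor <;> nlinarith [mul_nonneg ha hd, mul_nonneg hc hb]
  have hlip : |a * d - c * b| ≤ d * (|a - c| + |b - d|) :=
    calc |a * d - c * b| = |(a - c) * d - c * (b - d)| := by ring_nf
      _ ≤ |(a - c) * d| + |c * (b - d)| := abs_sub _ _
      _ = |a - c| * d + c * |b - d| := by rw [abs_mul, abs_mul, abs_of_nonneg hd, abs_of_nonneg hc]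
      _ ≤ d * (|a - c| + |b - d|) := by nlinarith [abs_nonneg (b - d)]
  refine div_le_of_le_mul₀ (by positivity) (by positivity) ?_
  calc (a * d - c * b) ^ 2 = |a * d - c * b| * |a * d - c * b| := by
        rw [abs_mul_abs_self, sq]
    _ ≤ (b * d) * (d * (|a - c| + |b - d|)) :=
      mul_le_mul hbound hlip (abs_nonneg _) (mul_nonneg hb hd)
    _ = (|a - c| + |b - d|) * (b * d ^ 2) := by ring

section

variable {Ω ι : Type*} [MeasurableSpace Ω] {μ : Measure Ω} {l : Filter ι}

lemma integral_abs_le_sqrt_integral_sq [IsProbabilityMeasure μ] {X : Ω → ℝ} (hX : MemLp X 2 μ) :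
    ∫ ω, |X ω| ∂μ ≤ √(∫ ω, X ω ^ 2 ∂μ) := by
  refine Real.le_sqrt_of_sq_le ?_
  have hvar := variance_nonneg |X| μ
  rw [variance_eq_sub hX.abs] at hvar
  simpa [sq_abs] using hvar

lemma tendsto_integral_abs_of_tendsto_integral_sq [IsProbabilityMeasure μ] {X : ι → Ω → ℝ}
    (hX : ∀ i, MemLp (X i) 2 μ) (h : Tendsto (fun i => ∫ ω, X i ω ^ 2 ∂μ) l (𝓝 0)) :
    Tendsto (fun i => ∫ ω, |X i ω| ∂μ) l (𝓝 0) := by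
  have hsqrt : Tendsto (fun i => √(∫ ω, X i ω ^ 2 ∂μ)) l (𝓝 0) := by
    simpa [Function.comp_def] using (Real.continuous_sqrt.tendsto 0).comp h
  exact squeeze_zero (fun i => integral_nonneg fun ω => abs_nonneg _)
    (fun i => integral_abs_le_sqrt_integral_sq (hX i)) hsqrt

lemma tendsto_integral_of_ae_le_of_tendsto {f g : ι → Ω → ℝ} (hf : ∀ i, 0 ≤ᵐ[μ] f i)
    (hfg : ∀ i, f i ≤ᵐ[μ] g i) (hg : ∀ i, Integrable (g i) μ)
    (hlim : Tendsto (fun i => ∫ ω, g i ω ∂μ) l (𝓝 0)) :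
    Tendsto (fun i => ∫ ω, f i ω ∂μ) l (𝓝 0) :=
  squeeze_zero (fun i => integral_nonneg_of_ae (hf i))
    (fun i => integral_mono_of_nonneg (hf i) (hg i) (hfg i)) hlim

end

theorem stmt9_general {Ω : Type*} [MeasurableSpace Ω] (μ : Measure Ω) [IsProbabilityMeasure μ]
    (B : ℝ)
    (φhat δhat : ℕ → Ω → ℝ) (φsq δsq : ℕ → ℝ)
    (hφNN : ∀ T, ∀ᵐ ω ∂μ, 0 ≤ φhat T ω)
    (hle : ∀ T, ∀ᵐ ω ∂μ, φhat T ω ≤ δhat T ω)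
    (hconst : ∀ T, 0 ≤ φsq T ∧ φsq T ≤ δsq T ∧ δsq T ≤ B)
    (hL2φ : ∀ T, MemLp (φhat T) 2 μ) (hL2δ : ∀ T, MemLp (δhat T) 2 μ)
    (hφ : Tendsto (fun T => ∫ ω, (φhat T ω - φsq T) ^ 2 ∂μ) atTop (nhds 0))
    (hδ : Tendsto (fun T => ∫ ω, (δhat T ω - δsq T) ^ 2 ∂μ) atTop (nhds 0)) :
    Tendsto
      (fun T => ∫ ω,
        (φhat T ω * δsq T - φsq T * δhat T ω) ^ 2 / (δhat T ω * (δsq T) ^ 2) ∂μ)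
      atTop (nhds 0) := by
  have hφL2 T : MemLp (fun ω => φhat T ω - φsq T) 2 μ := (hL2φ T).sub (memLp_const _)
  have hδL2 T : MemLp (fun ω => δhat T ω - δsq T) 2 μ := (hL2δ T).sub (memLp_const _)
  have hφL1 T := ((hφL2 T).integrable one_le_two).abs
  have hδL1 T := ((hδL2 T).integrable one_le_two).abs
  refine tendsto_integral_of_ae_le_of_tendsto
    (g := fun T ω => |φhat T ω - φsq T| + |δhat T ω - δsq T|)
    (fun T => ?_) (fun T => ?_) (fun T => (hφL1 T).add (hδL1 T)) ?_
  · filter_upwards [hφNN T, hle T] with ω ha hab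
    exact div_nonneg (sq_nonneg _) (mul_nonneg (ha.trans hab) (sq_nonneg _))
  · filter_upwards [hφNN T, hle T] with ω ha hab
    exact sq_mul_sub_mul_div_le ha hab (hconst T).1 (hconst T).2.1
  · simp_rw [integral_add (hφL1 _) (hδL1 _)]
    simpa using (tendsto_integral_abs_of_tendsto_integral_sq hφL2 hφ).add
      (tendsto_integral_abs_of_tendsto_integral_sq hδL2 hδ)

/-- core estimate of Theorem 2 of the paper.
With nonnegative random variables `φ̂_T² ≤ δ̂_T²` (a.s.) and constants
`0 ≤ φ_T² ≤ δ_T² ≤ B`, if `E[(φ̂_T² − φ_T²)²] → 0` and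
`E[(δ̂_T² − δ_T²)²] → 0`, then
`E[(φ̂_T² δ_T² − φ_T² δ̂_T²)² / (δ̂_T² δ_T⁴)] → 0` (quotients are `0` when the
denominator vanishes, Lean's division-by-zero convention). -/
theorem stmt9 {Ω : Type*} [MeasurableSpace Ω] (μ : Measure Ω) [IsProbabilityMeasure μ]
    (B : ℝ) (hB : 0 < B)
    (φhat δhat : ℕ → Ω → ℝ) (φsq δsq : ℕ → ℝ)
    (hmeasφ : ∀ T, Measurable (φhat T)) (hmeasδ : ∀ T, Measurable (δhat T))
    (hφNN : ∀ T, ∀ᵐ ω ∂μ, 0 ≤ φhat T ω) (hδNN : ∀ T, ∀ᵐ ω ∂μ, 0 ≤ δhat T ω)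
    (hle : ∀ T, ∀ᵐ ω ∂μ, φhat T ω ≤ δhat T ω)
    (hconst : ∀ T, 0 ≤ φsq T ∧ φsq T ≤ δsq T ∧ δsq T ≤ B)
    (hL2φ : ∀ T, MemLp (φhat T) 2 μ) (hL2δ : ∀ T, MemLp (δhat T) 2 μ)
    (hφ : Tendsto (fun T => ∫ ω, (φhat T ω - φsq T) ^ 2 ∂μ) atTop (nhds 0))
    (hδ : Tendsto (fun T => ∫ ω, (δhat T ω - δsq T) ^ 2 ∂μ) atTop (nhds 0)) :
    Tendsto
      (fun T => ∫ ω,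
        (φhat T ω * δsq T - φsq T * δhat T ω) ^ 2 / (δhat T ω * (δsq T) ^ 2) ∂μ)
      atTop (nhds 0) :=
  stmt9_general μ B φhat δhat φsq δsq hφNN hle hconst hL2φ hL2δ hφ hδ
end
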